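/- Let R be a finite relation on a set U that is a Hasse diagram, let (u,v) ∈ R, let R₁ = R \ {(u,v)}, and let R₂ = R₁ ∪ {(x,v) : (x,u) ∈ R and (x,v) ∉ R₁*} ∪ {(u,y) : (v,y) ∈ R and (u,y) ∉ R₁*}, where S* denotes the reflexive-transitive closure of a relation S. Then R₂* = R* \ {(u,v)}. -/

import Mathlib

/-!
Removing the edge `(u, v)` breaks only those `R`-paths that use it, and each of them passes
`x → u → v → y` for some `x`, `y`. The added edges `(x, v)` and `(u, y)` (where not already
implied by `R₁`) restore every such path unless it is the single edge `(u, v)`. Conversely every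
new edge is a pair of `R*`, and since `(u, v)` is a covering pair of `R*`, a path from `u` to `v`
all of whose edges lie in `R*` and differ from `(u, v)` cannot exist.
-/

/-- The reflexive-transitive closure `S*` of a relation on `U` given as a set of pairs. -/
def closRel {U : Type*} (R : Set (U × U)) : U → U → Prop :=
  Relation.ReflTransGen (fun a b => (a, b) ∈ R)

/-- The covering relation of a partial order `le` on `U`: `(a, b)` is a covering pair iff
`a ≺ b` and there is no `w` with `a ≺ w ≺ b` (where `x ≺ y` means `le x y ∧ x ≠ y`). -/
def coverRel {U : Type*} (le : U → U → Prop) (a b : U) : Prop :=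
  (le a b ∧ a ≠ b) ∧ ∀ w, ¬ ((le a w ∧ a ≠ w) ∧ (le w b ∧ w ≠ b))

/-- `R` is a Hasse diagram: its reflexive-transitive closure `R*` is a partial order
(antisymmetric; reflexivity and transitivity are automatic) and `R` equals the covering
relation of `R*` (i.e. `R` is acyclic and transitively reduced). -/
def IsHasseDiagram {U : Type*} (R : Set (U × U)) : Prop :=
  (∀ a b : U, closRel R a b → closRel R b a → a = b) ∧
  (∀ a b : U, (a, b) ∈ R ↔ coverRel (closRel R) a b)

/-- The relation `R₂` of the statement, with `R₁ = R \ {(u, v)}` inlined. -/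
def removeEdge {U : Type*} (R : Set (U × U)) (u v : U) : Set (U × U) :=
  R \ {(u, v)}
    ∪ {q | ∃ x, q = (x, v) ∧ (x, u) ∈ R ∧ ¬ closRel (R \ {(u, v)}) x v}
    ∪ {q | ∃ y, q = (u, y) ∧ (v, y) ∈ R ∧ ¬ closRel (R \ {(u, v)}) u y}

section closRel

variable {U : Type*} {R S : Set (U × U)} {a b u v : U}

theorem closRel_mono (h : R ⊆ S) : closRel R a b → closRel S a b :=
  Relation.ReflTransGen.mono (fun _ _ hab => h hab) _ _

theorem closRel_of_forall_mem (h : ∀ a b, (a, b) ∈ R → closRel S a b) :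
    closRel R a b → closRel S a b :=
  Relation.ReflTransGen.lift' id h _ _

theorem closRel_diff_singleton_or (h : closRel R a b) :
    closRel (R \ {(u, v)}) a b ∨ closRel (R \ {(u, v)}) a u ∧ closRel (R \ {(u, v)}) v b := by
  induction h with
  | refl => exact Or.inl .refl
  | @tail b c _ hbc ih =>
    by_cases hbc' : (b, c) = (u, v)
    · obtain ⟨rfl, rfl⟩ := Prod.ext_iff.1 hbc'
      exact Or.inr ⟨ih.elim id And.left, .refl⟩
    · have hmem : (b, c) ∈ R \ {(u, v)} := ⟨hbc, hbc'⟩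
      exact ih.imp (·.tail hmem) fun ⟨hau, hvb⟩ => ⟨hau, hvb.tail hmem⟩

theorem eq_of_closRel_of_coverRel (hcov : coverRel (closRel R) u v)
    (hS : ∀ a b, (a, b) ∈ S → closRel R a b) (huv : (u, v) ∉ S)
    (h : closRel S u b) (hbv : closRel R b v) : b = u := by
  induction h with
  | refl => rfl
  | @tail b c _ hbc ih =>
    obtain rfl := ih ((hS _ _ hbc).trans hbv)
    by_contra hcu
    have hcv : c ≠ v := by rintro rfl; exact huv hbc
    exact hcov.2 c ⟨⟨hS _ _ hbc, Ne.symm hcu⟩, hbv, hcv⟩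

theorem not_closRel_of_coverRel (hcov : coverRel (closRel R) u v)
    (hS : ∀ a b, (a, b) ∈ S → closRel R a b) (huv : (u, v) ∉ S) : ¬ closRel S u v :=
  fun h => hcov.1.2 (eq_of_closRel_of_coverRel hcov hS huv h .refl).symm

end closRel

theorem IsHasseDiagram.irrefl {U : Type*} {R : Set (U × U)} (hR : IsHasseDiagram R)
    (a : U) : (a, a) ∉ R :=
  fun h => ((hR.2 a a).1 h).1.2 rfl

namespace removeEdge

variable {U : Type*} {R : Set (U × U)} {a b u v : U}

theorem diff_subset : R \ {(u, v)} ⊆ removeEdge R u v :=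
  fun _ hq => Or.inl (Or.inl hq)

theorem closRel_of_mem_left (hx : (a, u) ∈ R) : closRel (removeEdge R u v) a v := by
  by_cases h : closRel (R \ {(u, v)}) a v
  · exact closRel_mono diff_subset h
  · exact .single (Or.inl (Or.inr ⟨a, rfl, hx, h⟩))

theorem closRel_of_mem_right (hy : (v, b) ∈ R) : closRel (removeEdge R u v) u b := by
  by_cases h : closRel (R \ {(u, v)}) u b
  · exact closRel_mono diff_subset h
  · exact .single (Or.inr ⟨b, rfl, hy, h⟩)

theorem closRel_of_mem (huv : (u, v) ∈ R) (hab : (a, b) ∈ removeEdge R u v) :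
    closRel R a b := by
  rcases hab with (h | ⟨x, hx, hxu, -⟩) | ⟨y, hy, hvy, -⟩
  · exact .single h.1
  · obtain ⟨rfl, rfl⟩ := Prod.ext_iff.1 hx
    exact .head hxu (.single huv)
  · obtain ⟨rfl, rfl⟩ := Prod.ext_iff.1 hy
    exact .head huv (.single hvy)

theorem notMem (hR : IsHasseDiagram R) : (u, v) ∉ removeEdge R u v := by
  rintro ((h | ⟨x, hx, hxu, -⟩) | ⟨y, hy, hvy, -⟩)
  · exact h.2 rfl
  · obtain ⟨rfl, -⟩ := Prod.ext_iff.1 hx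
    exact hR.irrefl _ hxu
  · obtain ⟨-, rfl⟩ := Prod.ext_iff.1 hy
    exact hR.irrefl _ hvy

theorem closRel_of_closRel (h : closRel R a b) (hab : (a, b) ≠ (u, v)) :
    closRel (removeEdge R u v) a b := by
  have lift : ∀ {c d}, closRel (R \ {(u, v)}) c d → closRel (removeEdge R u v) c d :=
    closRel_mono diff_subset
  rcases closRel_diff_singleton_or h with h₁ | ⟨hau, hvb⟩
  · exact lift h₁
  by_cases ha : a = u
  · subst ha
    rcases hvb.cases_head with rfl | ⟨y, hvy, hyb⟩
    · exact absurd rfl hab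
    · exact (closRel_of_mem_right hvy.1).trans (lift hyb)
  · rcases hau.cases_tail with rfl | ⟨x, hax, hxu⟩
    · exact absurd rfl ha
    · exact ((lift hax).trans (closRel_of_mem_left hxu.1)).trans (lift hvb)

end removeEdge

theorem closure_remove_edge_general {U : Type*} (R : Set (U × U))
    (hR : IsHasseDiagram R) (u v : U) (huv : (u, v) ∈ R)
    (R₁ R₂ : Set (U × U)) (hR₁ : R₁ = R \ {(u, v)})
    (hR₂ : R₂ = R₁ ∪ {q | ∃ x, q = (x, v) ∧ (x, u) ∈ R ∧ ¬ closRel R₁ x v}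
                   ∪ {q | ∃ y, q = (u, y) ∧ (v, y) ∈ R ∧ ¬ closRel R₁ u y}) :
    {p : U × U | closRel R₂ p.1 p.2} = {p : U × U | closRel R p.1 p.2} \ {(u, v)} := by
  subst hR₁
  change R₂ = removeEdge R u v at hR₂
  subst hR₂
  have hcov : coverRel (closRel R) u v := (hR.2 u v).1 huv
  have hsub : ∀ a b, (a, b) ∈ removeEdge R u v → closRel R a b :=
    fun _ _ => removeEdge.closRel_of_mem huv
  ext ⟨a, b⟩
  refine ⟨fun h => ⟨closRel_of_forall_mem hsub h, ?_⟩,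
    fun ⟨h, hab⟩ => removeEdge.closRel_of_closRel h hab⟩
  rintro ⟨⟩
  exact not_closRel_of_coverRel hcov hsub (removeEdge.notMem hR) h

/-- With `R`, `u`, `v`, `R₁`, `R₂` as in the edge-removal construction, the
reflexive-transitive closure of `R₂` equals `R* \\ {(u, v)}`. -/
theorem closure_remove_edge {U : Type*} [Fintype U] (R : Set (U × U))
    (hR : IsHasseDiagram R) (u v : U) (huv : (u, v) ∈ R)
    (R₁ R₂ : Set (U × U)) (hR₁ : R₁ = R \ {(u, v)})
    (hR₂ : R₂ = R₁ ∪ {q | ∃ x, q = (x, v) ∧ (x, u) ∈ R ∧ ¬ closRel R₁ x v}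
                   ∪ {q | ∃ y, q = (u, y) ∧ (v, y) ∈ R ∧ ¬ closRel R₁ u y}) :
    {p : U × U | closRel R₂ p.1 p.2} = {p : U × U | closRel R p.1 p.2} \ {(u, v)} :=
  closure_remove_edge_general R hR u v huv R₁ R₂ hR₁ hR₂
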